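/- Under the hypotheses on the Bloch-decomposition step B_{Δt}, the scheme is time reversible in the following sense: for every ψ : {0,…,L−1}×{0,…,R−1} → ℂ, applying the step with time increment Δt and then the step with time increment −Δt recovers ψ, i.e., B_{−Δt}(B_{Δt}(ψ)) = ψ. -/

import Mathlib

open Complex Finset Real

/-- One Bloch-decomposition step `B_{Δt}` of the Bloch decomposition-based
time-splitting scheme, on the fully discrete level: `L` quasi-momentum points
`k_ℓ = -1/2 + ℓ/L`, `R` grid points per cell, discrete Bloch eigenfunctions
`φ ℓ m r ≈ φ_m(y_r, k_ℓ)` and band energies `E ℓ m ≈ E_m(k_ℓ)`. -/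
noncomputable def blochStep (L R : ℕ) (ε Δt : ℝ)
    (φ : Fin L → Fin R → Fin R → ℂ) (E : Fin L → Fin R → ℝ)
    (ψ : Fin L → Fin R → ℂ) : Fin L → Fin R → ℂ :=
  let k : Fin L → ℝ := fun ℓ => -(1/2 : ℝ) + (ℓ : ℝ) / L
  -- step 1.1: ψ̃(ℓ,r) = ∑_j ψ(j,r) exp(−2πi k_ℓ j)
  let ψt : Fin L → Fin R → ℂ := fun ℓ r =>
    ∑ j : Fin L, ψ j r * Complex.exp (-(2 * π * Complex.I * (k ℓ) * (j : ℝ)))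
  -- step 1.2: C(m,ℓ) = (2π/R) ∑_r ψ̃(ℓ,r) conj(φ_ℓ(m,r))
  let C : Fin R → Fin L → ℂ := fun m ℓ =>
    (2 * (π : ℂ) / R) * ∑ r : Fin R, ψt ℓ r * (starRingEnd ℂ) (φ ℓ m r)
  -- step 1.3: C'(m,ℓ) = C(m,ℓ) exp(−i E_ℓ(m) Δt / ε)
  let C' : Fin R → Fin L → ℂ := fun m ℓ =>
    C m ℓ * Complex.exp (-(Complex.I * (E ℓ m) * Δt / ε))
  -- step 1.4: ψ̃'(ℓ,r) = ∑_m C'(m,ℓ) φ_ℓ(m,r)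
  let ψt' : Fin L → Fin R → ℂ := fun ℓ r => ∑ m : Fin R, C' m ℓ * φ ℓ m r
  -- step 1.5: ψ'(ℓ,r) = (1/L) ∑_j ψ̃'(j,r) exp(2πi k_j ℓ)
  fun ℓ r =>
    (1 / (L : ℂ)) * ∑ j : Fin L, ψt' j r * Complex.exp (2 * π * Complex.I * (k j) * (ℓ : ℝ))


/-! `B_Δt` factors as `F⁻¹ ∘ S ∘ P_Δt ∘ A ∘ F`: the discrete Bloch transform `F`, analysis `A`
and synthesis `S` in the eigenbasis `φ_ℓ` at each quasi-momentum, and the band phases `P_Δt`.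
Both kernels are biorthogonal (the Fourier kernel by summing roots of unity, `φ` by hypothesis),
so `F ∘ F⁻¹`, `A ∘ S`, `S ∘ A` and `F⁻¹ ∘ F` are identities and `P_{-Δt} ∘ P_Δt = id`;
in `B_{-Δt} ∘ B_Δt` everything cancels from the inside out. -/

theorem sum_sum_mul_mul_eq_of_biorthogonal {R ι κ : Type*} [CommSemiring R] [Fintype ι]
    [Fintype κ] [DecidableEq κ] {K : κ → ι → R} {K' : ι → κ → R} {c : R}
    (hK : ∀ a b, ∑ i, K a i * K' i b = if a = b then c else 0) (f : κ → R) (b : κ) :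
    ∑ i, (∑ a, f a * K a i) * K' i b = c * f b := by
  simp_rw [sum_mul, mul_assoc]
  rw [sum_comm]
  simp_rw [← mul_sum, hK, mul_ite, mul_zero, sum_ite_eq', mem_univ, if_true, mul_comm]

theorem IsPrimitiveRoot.sum_range_zpow_pow {K : Type*} [Field K] {ζ : K} {L : ℕ}
    (hζ : IsPrimitiveRoot ζ L) (n : ℤ) :
    ∑ j ∈ range L, (ζ ^ n) ^ j = if (L : ℤ) ∣ n then (L : K) else 0 := by
  split_ifs with hn
  · simp [(hζ.zpow_eq_one_iff_dvd n).mpr hn]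
  · have hζn : ζ ^ n ≠ 1 := mt (hζ.zpow_eq_one_iff_dvd n).mp hn
    rw [geom_sum_eq hζn, ← zpow_natCast, ← zpow_mul, mul_comm, zpow_mul, zpow_natCast,
      hζ.pow_eq_one, one_zpow, sub_self, zero_div]

noncomputable def quasiMomentum (L : ℕ) (ℓ : Fin L) : ℝ := -(1/2 : ℝ) + (ℓ : ℝ) / L

theorem sum_exp_quasiMomentum_mul_exp_neg {L : ℕ} (a b : Fin L) :
    ∑ j : Fin L, exp (2 * π * I * quasiMomentum L a * (j : ℝ)) *
        exp (-(2 * π * I * quasiMomentum L b * (j : ℝ))) =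
      if a = b then (L : ℂ) else 0 := by
  have hL : L ≠ 0 := a.pos.ne'
  have hζ := Complex.isPrimitiveRoot_exp L hL
  have hterm : ∀ j : Fin L, exp (2 * π * I * quasiMomentum L a * (j : ℝ)) *
      exp (-(2 * π * I * quasiMomentum L b * (j : ℝ))) =
      (exp (2 * π * I / L) ^ ((a : ℤ) - b)) ^ (j : ℕ) := by
    intro j
    rw [← Complex.exp_int_mul, ← Complex.exp_nat_mul, ← Complex.exp_add, quasiMomentum,
      quasiMomentum]
    congr 1
    push_cast
    field_simp
    ring
  rw [Fintype.sum_congr _ _ hterm, Fin.sum_univ_eq_sum_range (fun j => (_ : ℂ) ^ j),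
    hζ.sum_range_zpow_pow]
  congr 1
  refine propext ⟨fun h => Fin.ext ?_, fun h => by simp [h]⟩
  have := Int.eq_zero_of_abs_lt_dvd h (abs_sub_lt_iff.mpr ⟨by omega, by omega⟩)
  omega

-- Not a geometric series in `j`; it follows from the previous lemma because a one-sided
-- inverse of a square matrix is two-sided.
theorem sum_exp_neg_mul_exp_quasiMomentum {L : ℕ} (a b : Fin L) :
    ∑ j : Fin L, exp (-(2 * π * I * quasiMomentum L j * (a : ℝ))) *
        exp (2 * π * I * quasiMomentum L j * (b : ℝ)) =
      if a = b then (L : ℂ) else 0 := by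
  have hL : (L : ℂ) ≠ 0 := Nat.cast_ne_zero.mpr a.pos.ne'
  let M : Matrix (Fin L) (Fin L) ℂ :=
    .of fun a j => exp (2 * π * I * quasiMomentum L a * (j : ℝ))
  let N : Matrix (Fin L) (Fin L) ℂ :=
    .of fun j b => exp (-(2 * π * I * quasiMomentum L b * (j : ℝ)))
  have hMN : M * N = (L : ℂ) • 1 := by
    ext a b
    simp only [Matrix.mul_apply, M, N, Matrix.of_apply, sum_exp_quasiMomentum_mul_exp_neg,
      Matrix.smul_apply, Matrix.one_apply, smul_eq_mul, mul_ite, mul_one, mul_zero]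
  have hNM : N * M = (L : ℂ) • 1 := by
    have hinv : N * ((L : ℂ)⁻¹ • M) = 1 :=
      mul_eq_one_comm.mp (by rw [Matrix.smul_mul, hMN, smul_smul, inv_mul_cancel₀ hL, one_smul])
    rw [Matrix.mul_smul, inv_smul_eq_iff₀ hL] at hinv
    exact hinv
  simpa [Matrix.mul_apply, M, N, Matrix.one_apply] using congr_fun₂ hNM a b

section BlochDecomposition

variable {L R : ℕ}

noncomputable def blochTransform (ψ : Fin L → Fin R → ℂ) : Fin L → Fin R → ℂ :=
  fun ℓ r => ∑ j : Fin L, ψ j r * exp (-(2 * π * I * quasiMomentum L ℓ * (j : ℝ)))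

noncomputable def blochTransformInv (χ : Fin L → Fin R → ℂ) : Fin L → Fin R → ℂ :=
  fun ℓ r => (1 / (L : ℂ)) * ∑ j : Fin L, χ j r * exp (2 * π * I * quasiMomentum L j * (ℓ : ℝ))

noncomputable def bandCoeff (φ : Fin L → Fin R → Fin R → ℂ) (χ : Fin L → Fin R → ℂ) :
    Fin R → Fin L → ℂ :=
  fun m ℓ => (2 * (π : ℂ) / R) * ∑ r : Fin R, χ ℓ r * (starRingEnd ℂ) (φ ℓ m r)

def bandSynth (φ : Fin L → Fin R → Fin R → ℂ) (C : Fin R → Fin L → ℂ) : Fin L → Fin R → ℂ :=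
  fun ℓ r => ∑ m : Fin R, C m ℓ * φ ℓ m r

noncomputable def bandPropagate (ε t : ℝ) (E : Fin L → Fin R → ℝ) (C : Fin R → Fin L → ℂ) :
    Fin R → Fin L → ℂ :=
  fun m ℓ => C m ℓ * exp (-(I * (E ℓ m) * t / ε))

theorem blochStep_eq_comp (ε t : ℝ) (φ : Fin L → Fin R → Fin R → ℂ) (E : Fin L → Fin R → ℝ) :
    blochStep L R ε t φ E =
      blochTransformInv ∘ bandSynth φ ∘ bandPropagate ε t E ∘ bandCoeff φ ∘ blochTransform :=
  rfl

theorem blochTransform_blochTransformInv (χ : Fin L → Fin R → ℂ) :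
    blochTransform (blochTransformInv χ) = χ := by
  funext ℓ r
  have hL : (L : ℂ) ≠ 0 := Nat.cast_ne_zero.mpr ℓ.pos.ne'
  simp only [blochTransform, blochTransformInv]
  simp_rw [mul_sum, ← mul_assoc]
  rw [sum_sum_mul_mul_eq_of_biorthogonal sum_exp_quasiMomentum_mul_exp_neg]
  field_simp

theorem blochTransformInv_blochTransform (ψ : Fin L → Fin R → ℂ) :
    blochTransformInv (blochTransform ψ) = ψ := by
  funext ℓ r
  have hL : (L : ℂ) ≠ 0 := Nat.cast_ne_zero.mpr ℓ.pos.ne'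
  simp only [blochTransform, blochTransformInv]
  rw [sum_sum_mul_mul_eq_of_biorthogonal sum_exp_neg_mul_exp_quasiMomentum]
  field_simp

theorem bandPropagate_neg (ε t : ℝ) (E : Fin L → Fin R → ℝ) (C : Fin R → Fin L → ℂ) :
    bandPropagate ε (-t) E (bandPropagate ε t E C) = C := by
  funext m ℓ
  rw [bandPropagate, bandPropagate, mul_assoc, ← Complex.exp_add, ofReal_neg]
  ring_nf
  rw [Complex.exp_zero, mul_one]

variable {φ : Fin L → Fin R → Fin R → ℂ}

theorem bandCoeff_bandSynth
    (horth : ∀ j : Fin L, ∀ m n : Fin R,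
      ∑ r : Fin R, φ j m r * (starRingEnd ℂ) (φ j n r) =
        if m = n then ((R : ℂ) / (2 * π)) else 0)
    (C : Fin R → Fin L → ℂ) :
    bandCoeff φ (bandSynth φ C) = C := by
  funext m ℓ
  have hR : (R : ℂ) ≠ 0 := Nat.cast_ne_zero.mpr m.pos.ne'
  simp only [bandCoeff, bandSynth]
  rw [sum_sum_mul_mul_eq_of_biorthogonal (horth ℓ)]
  field_simp

theorem bandSynth_bandCoeff
    (horth : ∀ j : Fin L, ∀ r s : Fin R,
      ∑ m : Fin R, φ j m r * (starRingEnd ℂ) (φ j m s) =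
        if r = s then ((R : ℂ) / (2 * π)) else 0)
    (χ : Fin L → Fin R → ℂ) :
    bandSynth φ (bandCoeff φ χ) = χ := by
  funext ℓ r
  have hR : (R : ℂ) ≠ 0 := Nat.cast_ne_zero.mpr r.pos.ne'
  have horth' : ∀ s r, ∑ m : Fin R, (starRingEnd ℂ) (φ ℓ m s) * φ ℓ m r =
      if s = r then ((R : ℂ) / (2 * π)) else 0 := fun s r => by
    simp_rw [mul_comm _ (φ ℓ _ r), horth ℓ r s, eq_comm]
  simp only [bandCoeff, bandSynth]
  simp_rw [mul_sum, ← mul_assoc]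
  rw [sum_sum_mul_mul_eq_of_biorthogonal horth']
  field_simp

end BlochDecomposition

theorem blochStep_time_reversible_general
    (L R : ℕ) (ε Δt : ℝ)
    (φ : Fin L → Fin R → Fin R → ℂ) (E : Fin L → Fin R → ℝ)
    (horth₁ : ∀ j : Fin L, ∀ m n : Fin R,
      ∑ r : Fin R, φ j m r * (starRingEnd ℂ) (φ j n r) =
        if m = n then ((R : ℂ) / (2 * π)) else 0)
    (horth₂ : ∀ j : Fin L, ∀ r s : Fin R,
      ∑ m : Fin R, φ j m r * (starRingEnd ℂ) (φ j m s) =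
        if r = s then ((R : ℂ) / (2 * π)) else 0)
    (ψ : Fin L → Fin R → ℂ) :
    blochStep L R ε (-Δt) φ E (blochStep L R ε Δt φ E ψ) = ψ := by
  simp only [blochStep_eq_comp, Function.comp_apply, blochTransform_blochTransformInv,
    bandCoeff_bandSynth horth₁, bandPropagate_neg, bandSynth_bandCoeff horth₂,
    blochTransformInv_blochTransform]

theorem blochStep_time_reversible
    (L R : ℕ) (hL : 1 ≤ L) (hR : 1 ≤ R) (ε Δt : ℝ) (hε : 0 < ε)
    (φ : Fin L → Fin R → Fin R → ℂ) (E : Fin L → Fin R → ℝ)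
    (horth₁ : ∀ j : Fin L, ∀ m n : Fin R,
      ∑ r : Fin R, φ j m r * (starRingEnd ℂ) (φ j n r) =
        if m = n then ((R : ℂ) / (2 * π)) else 0)
    (horth₂ : ∀ j : Fin L, ∀ r s : Fin R,
      ∑ m : Fin R, φ j m r * (starRingEnd ℂ) (φ j m s) =
        if r = s then ((R : ℂ) / (2 * π)) else 0)
    (ψ : Fin L → Fin R → ℂ) :
    blochStep L R ε (-Δt) φ E (blochStep L R ε Δt φ E ψ) = ψ :=
  blochStep_time_reversible_general L R ε Δt φ E horth₁ horth₂ ψ
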